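/- arXiv:2111.09989 — 2 statements merged into one kernel-verified Lean document; each statement's English description precedes it below -/
import Mathlib

section
/- If ρ ∈ (0,1] is such that ∑_n P(π(n) < ρ) < ∞, then for every ζ > 0 we have ∑_n P(Λ(n) < n·(ρ·I − ζ)) < ∞. -/
/-!
A Chernoff bound driven by a betting martingale. With `g = llr μ1 μ0` and
`φ(t) = ∫ exp (-t g) dμ1`, the right derivative of `φ` at `0` is `-I`, so for small `t > 0`
we get `log φ(t) ≤ -t (I - δ)`. Betting the stake `R m` on the fair factor `exp (-t g (X m)) / φ(t)`
gives a nonnegative mean-one wealth process (`R m` is previsible and `X m` is independent of the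
past) which equals `exp (-t Λ(n) - n π(n) log φ(t))`. On `{Λ(n) < n (ρ I - ζ), π(n) ≥ ρ}` it is
at least `exp (c n)`, so by Markov's inequality that event has geometrically small probability;
the event `{π(n) < ρ}` is summable by hypothesis.
-/

open MeasureTheory ProbabilityTheory Real Filter Topology

lemma exp_neg_mul_le {t : ℝ} (s : ℝ) (ht0 : 0 ≤ t) (ht1 : t ≤ 1) :
    exp (-(t * s)) ≤ 1 - t + t * exp (-s) := by
  have := convexOn_exp.2 (Set.mem_univ 0) (Set.mem_univ (-s)) (sub_nonneg.2 ht1) ht0 (by ring)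
  simpa [smul_eq_mul] using this

lemma abs_exp_neg_mul_sub_one_div_le {t : ℝ} (s : ℝ) (ht0 : 0 < t) (ht1 : t ≤ 1) :
    |(exp (-(t * s)) - 1) / t| ≤ |s| + exp (-s) + 1 := by
  have hlow : -(t * s) ≤ exp (-(t * s)) - 1 := by linarith [add_one_le_exp (-(t * s))]
  have hupp : exp (-(t * s)) - 1 ≤ t * (exp (-s) - 1) := by linarith [exp_neg_mul_le s ht0.le ht1]
  rw [abs_le, le_div_iff₀ ht0, div_le_iff₀ ht0]
  constructor <;> nlinarith [neg_abs_le s, le_abs_self s, exp_pos (-s)]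

section ExpIntegrals

variable {α : Type*} [MeasurableSpace α] {μ ν : Measure α}

lemma MeasureTheory.Integrable.exp_neg_mul [IsFiniteMeasure μ] {g : α → ℝ}
    (hg : AEStronglyMeasurable g μ) (hexp : Integrable (fun x ↦ exp (-g x)) μ) {t : ℝ}
    (ht0 : 0 ≤ t) (ht1 : t ≤ 1) :
    Integrable (fun x ↦ exp (-(t * g x))) μ :=
  ((integrable_const (1 - t)).add (hexp.const_mul t)).mono' (by fun_prop) <|
    ae_of_all _ fun x ↦ by
      rw [norm_of_nonneg (exp_pos _).le]
      exact exp_neg_mul_le (g x) ht0 ht1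

lemma integrable_exp_neg_llr [SigmaFinite μ] [IsFiniteMeasure ν] (hμν : μ ≪ ν) :
    Integrable (fun x ↦ exp (-llr μ ν x)) μ :=
  Measure.integrable_toReal_rnDeriv.congr (exp_neg_llr hμν).symm

lemma tendsto_integral_exp_neg_mul_sub_one_div [IsProbabilityMeasure μ] {g : α → ℝ}
    (hg : Integrable g μ) (hexp : Integrable (fun x ↦ exp (-g x)) μ) :
    Tendsto (fun t ↦ (∫ x, exp (-(t * g x)) ∂μ - 1) / t) (𝓝[>] 0) (𝓝 (-∫ x, g x ∂μ)) := by
  have hIoc : Set.Ioc (0 : ℝ) 1 ∈ 𝓝[>] 0 := Ioc_mem_nhdsGT one_pos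
  have hslope : ∀ s : ℝ,
      Tendsto (fun t ↦ (exp (-(t * s)) - 1) / t) (𝓝[>] 0) (𝓝 (-s)) := fun s ↦ by
    have hderiv : HasDerivAt (fun t ↦ exp (-(t * s))) (-s) 0 := by
      simpa using (((hasDerivAt_id (0 : ℝ)).mul_const s).neg).exp
    refine ((hasDerivAt_iff_tendsto_slope.mp hderiv).mono_left
      (nhdsWithin_mono _ fun t ht ↦ ne_of_gt ht)).congr' ?_
    filter_upwards [self_mem_nhdsWithin] with t ht
    simp [slope_def_field]
  have hdom := tendsto_integral_filter_of_dominated_convergence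
    (F := fun t x ↦ (exp (-(t * g x)) - 1) / t) (μ := μ) (fun x ↦ |g x| + exp (-g x) + 1)
    (Eventually.of_forall fun t ↦ by fun_prop)
    (eventually_of_mem hIoc fun t ht ↦ ae_of_all _ fun x ↦
      abs_exp_neg_mul_sub_one_div_le (g x) ht.1 ht.2)
    ((hg.abs.add hexp).add (integrable_const 1)) (ae_of_all _ fun x ↦ hslope (g x))
  rw [integral_neg] at hdom
  refine hdom.congr' (eventually_of_mem hIoc fun t ht ↦ ?_)
  rw [integral_div, integral_sub (hexp.exp_neg_mul hg.1 ht.1.le ht.2) (integrable_const 1),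
    integral_const, probReal_univ, one_smul]

lemma exists_integral_exp_neg_mul_le [IsProbabilityMeasure μ] {g : α → ℝ}
    (hg : Integrable g μ) (hexp : Integrable (fun x ↦ exp (-g x)) μ) {ε : ℝ} (hε : 0 < ε) :
    ∃ t, 0 < t ∧ t ≤ 1 ∧ ∫ x, exp (-(t * g x)) ∂μ ≤ 1 - t * (∫ x, g x ∂μ - ε) := by
  have hev := (tendsto_integral_exp_neg_mul_sub_one_div hg hexp).eventually_lt_const
    (show -∫ x, g x ∂μ < -∫ x, g x ∂μ + ε by linarith)
  obtain ⟨t, hlt, ht0, ht1⟩ := (hev.and (Ioc_mem_nhdsGT one_pos)).exists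
  rw [div_lt_iff₀ ht0] at hlt
  exact ⟨t, ht0, ht1, by linarith⟩

end ExpIntegrals

section BettingWealth

variable {Ω : Type*}

def bettingWealth (R Y : ℕ → Ω → ℝ) (n : ℕ) (ω : Ω) : ℝ :=
  ∏ m ∈ Finset.Icc 1 n, (1 + R m ω * (Y m ω - 1))

lemma bettingWealth_zero (R Y : ℕ → Ω → ℝ) : bettingWealth R Y 0 = 1 := by
  ext; simp [bettingWealth]

lemma bettingWealth_succ (R Y : ℕ → Ω → ℝ) (n : ℕ) (ω : Ω) :
    bettingWealth R Y (n + 1) ω = bettingWealth R Y n ω * (1 + R (n + 1) ω * (Y (n + 1) ω - 1)) :=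
  Finset.prod_Icc_succ_top (by omega) _

lemma bettingWealth_eq_exp_sum {R Y : ℕ → Ω → ℝ} {ω : Ω}
    (hR01 : ∀ m, R m ω = 0 ∨ R m ω = 1) (hY : ∀ m, 0 < Y m ω) (n : ℕ) :
    bettingWealth R Y n ω = exp (∑ m ∈ Finset.Icc 1 n, R m ω * log (Y m ω)) := by
  rw [bettingWealth, exp_sum]
  refine Finset.prod_congr rfl fun m _ ↦ ?_
  rcases hR01 m with hR | hR <;> simp [hR, exp_log (hY m)]

variable [mΩ : MeasurableSpace Ω] {P : Measure Ω}

lemma integrable_and_integral_mul_one_add_mul_sub_one {G : MeasurableSpace Ω} (hG : G ≤ mΩ)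
    {A R Y : Ω → ℝ} {C : ℝ} (hA : Measurable[G] A) (hAint : Integrable A P)
    (hR : Measurable[G] R) (hRC : ∀ ω, |R ω| ≤ C) (hYint : Integrable Y P)
    (hY1 : ∫ ω, Y ω ∂P = 1) (hindep : Indep (.comap Y inferInstance) G P) :
    Integrable (fun ω ↦ A ω * (1 + R ω * (Y ω - 1))) P ∧
      ∫ ω, A ω * (1 + R ω * (Y ω - 1)) ∂P = ∫ ω, A ω ∂P := by
  have hsplit : (fun ω ↦ A ω * (1 + R ω * (Y ω - 1))) =
      fun ω ↦ A ω * (1 - R ω) + A ω * R ω * Y ω := by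
    ext ω; ring
  have hA1R : Integrable (fun ω ↦ A ω * (1 - R ω)) P :=
    hAint.mul_bdd (c := 1 + C) ((measurable_const.sub (hR.mono hG le_rfl)).aestronglyMeasurable)
      (ae_of_all _ fun ω ↦ (norm_sub_le _ _).trans (by simp [hRC ω]))
  have hAR : Integrable (fun ω ↦ A ω * R ω) P :=
    hAint.mul_bdd (hR.mono hG le_rfl).aestronglyMeasurable (ae_of_all _ fun ω ↦ hRC ω)
  have hindepARY : IndepFun (fun ω ↦ A ω * R ω) Y P :=
    indep_of_indep_of_le_left hindep.symm (hA.mul hR).comap_le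
  have hARY : Integrable (fun ω ↦ A ω * R ω * Y ω) P := hindepARY.integrable_mul hAR hYint
  refine ⟨hsplit ▸ hA1R.add hARY, ?_⟩
  rw [hsplit, integral_add hA1R hARY,
    hindepARY.integral_fun_mul_eq_mul_integral hAR.1 hYint.1, hY1, mul_one,
    ← integral_add hA1R hAR]
  congr 1; ext ω; ring

variable (F : Filtration ℕ mΩ) {R Y : ℕ → Ω → ℝ}

lemma measurable_bettingWealth (hRmeas : ∀ n, 1 ≤ n → Measurable[F (n - 1)] (R n))
    (hYmeas : ∀ n, 1 ≤ n → Measurable[F n] (Y n)) (n : ℕ) :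
    Measurable[F n] (bettingWealth R Y n) := by
  refine Finset.measurable_prod _ fun m hm ↦ ?_
  obtain ⟨hm1, hmn⟩ := Finset.mem_Icc.mp hm
  have hRm := (hRmeas m hm1).mono (F.mono (show m - 1 ≤ n by omega)) le_rfl
  have hYm := (hYmeas m hm1).mono (F.mono hmn) le_rfl
  exact measurable_const.add (hRm.mul (hYm.sub measurable_const))

lemma integrable_and_integral_bettingWealth [IsProbabilityMeasure P] {C : ℝ}
    (hRmeas : ∀ n, 1 ≤ n → Measurable[F (n - 1)] (R n)) (hRC : ∀ n ω, |R n ω| ≤ C)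
    (hYmeas : ∀ n, 1 ≤ n → Measurable[F n] (Y n)) (hYint : ∀ n, 1 ≤ n → Integrable (Y n) P)
    (hY1 : ∀ n, 1 ≤ n → ∫ ω, Y n ω ∂P = 1)
    (hYindep : ∀ n, 1 ≤ n → Indep (.comap (Y n) inferInstance) (F (n - 1)) P) (n : ℕ) :
    Integrable (bettingWealth R Y n) P ∧ ∫ ω, bettingWealth R Y n ω ∂P = 1 := by
  induction n with
  | zero => exact bettingWealth_zero R Y ▸ ⟨integrable_const (1 : ℝ), by simp⟩
  | succ n ih =>
    have hn : 1 ≤ n + 1 := by omega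
    have hstep := integrable_and_integral_mul_one_add_mul_sub_one (F.le n)
      (measurable_bettingWealth F hRmeas hYmeas n) ih.1 (hRmeas (n + 1) hn) (hRC (n + 1))
      (hYint (n + 1) hn) (hY1 (n + 1) hn) (hYindep (n + 1) hn)
    simp only [← bettingWealth_succ] at hstep
    exact ⟨hstep.1, hstep.2.trans ih.2⟩

end BettingWealth

lemma measure_le_ofReal_exp_neg {Ω : Type*} [MeasurableSpace Ω] {P : Measure Ω}
    [IsFiniteMeasure P] {f : Ω → ℝ} (hf0 : ∀ ω, 0 ≤ f ω) (hfint : Integrable f P)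
    (hf1 : ∫ ω, f ω ∂P = 1) {s : Set Ω} {a : ℝ} (hs : ∀ ω ∈ s, exp a ≤ f ω) :
    P s ≤ ENNReal.ofReal (exp (-a)) := by
  have hmarkov := mul_meas_ge_le_integral_of_nonneg (ae_of_all _ hf0) hfint (exp a)
  rw [hf1, ← le_div_iff₀' (exp_pos a), one_div, ← exp_neg] at hmarkov
  calc P s ≤ P {ω | exp a ≤ f ω} := measure_mono hs
    _ ≤ ENNReal.ofReal (exp (-a)) := by
      rw [← ofReal_measureReal]; exact ENNReal.ofReal_le_ofReal hmarkov

section Model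

variable {Ω S : Type*} [mΩ : MeasurableSpace Ω] [mS : MeasurableSpace S]
  {P : Measure Ω} [IsProbabilityMeasure P] {μ0 μ1 : Measure S}
  {F : Filtration ℕ mΩ} {X : ℕ → Ω → S} {R : ℕ → Ω → ℝ}

lemma integrable_and_integral_bettingWealth_comp {h : S → ℝ} (hh : Measurable h)
    (hhint : Integrable h μ1) (hh1 : ∫ x, h x ∂μ1 = 1)
    (hXmeas : ∀ n, 1 ≤ n → Measurable[F n] (X n))
    (hXlaw : ∀ n, 1 ≤ n → Measure.map (X n) P = μ1)
    (hXindep : ∀ n, 1 ≤ n → Indep (MeasurableSpace.comap (X n) mS) (F (n - 1)) P)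
    {C : ℝ} (hRC : ∀ n ω, |R n ω| ≤ C) (hRmeas : ∀ n, 1 ≤ n → Measurable[F (n - 1)] (R n))
    (n : ℕ) :
    Integrable (bettingWealth R (fun m ω ↦ h (X m ω)) n) P ∧
      ∫ ω, bettingWealth R (fun m ω ↦ h (X m ω)) n ω ∂P = 1 := by
  have hX : ∀ n, 1 ≤ n → Measurable (X n) := fun n hn ↦ (hXmeas n hn).mono (F.le n) le_rfl
  refine integrable_and_integral_bettingWealth F hRmeas hRC (fun n hn ↦ hh.comp (hXmeas n hn))
    (fun n hn ↦ ?_) (fun n hn ↦ ?_) (fun n hn ↦ ?_) n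
  · rw [← integrable_map_measure hh.aestronglyMeasurable (hX n hn).aemeasurable, hXlaw n hn]
    exact hhint
  · show ∫ ω, h (X n ω) ∂P = 1
    rw [← integral_map (hX n hn).aemeasurable hh.aestronglyMeasurable, hXlaw n hn, hh1]
  · exact indep_of_indep_of_le_left (hXindep n hn) (hh.comp (comap_measurable (X n))).comap_le

theorem exists_measure_sum_llr_lt_inter_le [IsProbabilityMeasure μ0] [IsProbabilityMeasure μ1]
    (hac : μ1 ≪ μ0) (hint : Integrable (llr μ1 μ0) μ1) (hIpos : 0 < ∫ x, llr μ1 μ0 x ∂μ1)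
    (hXmeas : ∀ n, 1 ≤ n → Measurable[F n] (X n))
    (hXlaw : ∀ n, 1 ≤ n → Measure.map (X n) P = μ1)
    (hXindep : ∀ n, 1 ≤ n → Indep (MeasurableSpace.comap (X n) mS) (F (n - 1)) P)
    (hR01 : ∀ n ω, R n ω = 0 ∨ R n ω = 1) (hRmeas : ∀ n, 1 ≤ n → Measurable[F (n - 1)] (R n))
    {ρ ζ : ℝ} (hρ0 : 0 ≤ ρ) (hρ1 : ρ ≤ 1) (hζ : 0 < ζ) :
    ∃ c > 0, ∀ n : ℕ,
      P ({ω | ∑ m ∈ Finset.Icc 1 n, llr μ1 μ0 (X m ω) * R m ω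
          < n * (ρ * ∫ x, llr μ1 μ0 x ∂μ1 - ζ)} ∩ {ω | ρ * n ≤ ∑ m ∈ Finset.Icc 1 n, R m ω})
        ≤ ENNReal.ofReal (exp (-(c * n))) := by
  set g := llr μ1 μ0
  set I := ∫ x, g x ∂μ1
  obtain ⟨δ, hδ, hδI, hρδ⟩ : ∃ δ, 0 < δ ∧ δ ≤ I ∧ ρ * δ ≤ ζ / 2 :=
    ⟨min I ζ / 2, by positivity, by linarith [min_le_left I ζ],
      by nlinarith [min_le_right I ζ, lt_min hIpos hζ]⟩
  obtain ⟨t, ht0, ht1, hφle⟩ := exists_integral_exp_neg_mul_le hint (integrable_exp_neg_llr hac) hδ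
  set φ := ∫ x, exp (-(t * g x)) ∂μ1
  have hφint : Integrable (fun x ↦ exp (-(t * g x))) μ1 :=
    (integrable_exp_neg_llr hac).exp_neg_mul (measurable_llr _ _).aestronglyMeasurable ht0.le ht1
  have hφ : 0 < φ := integral_exp_pos hφint
  have hlogφ : log φ ≤ -(t * (I - δ)) := (log_le_sub_one_of_pos hφ).trans (by linarith)
  -- `h` is the density of the exponentially tilted law `exp (-t g) μ1 / φ` with respect to `μ1`
  set h : S → ℝ := fun x ↦ exp (-(t * g x)) / φ
  have hW := integrable_and_integral_bettingWealth_comp (h := h) (by fun_prop)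
    (hφint.div_const φ) (by rw [integral_div]; exact div_self hφ.ne')
    hXmeas hXlaw hXindep (C := 1) (fun n ω ↦ by rcases hR01 n ω with hR | hR <;> simp [hR]) hRmeas
  refine ⟨t * ζ / 2, by positivity, fun n ↦ ?_⟩
  refine measure_le_ofReal_exp_neg (fun ω ↦ ?_) (hW n).1 (hW n).2 fun ω ⟨hΛ, hN⟩ ↦ ?_
  · rw [bettingWealth_eq_exp_sum (hR01 · ω) (fun m ↦ by positivity)]
    exact (exp_pos _).le
  rw [bettingWealth_eq_exp_sum (hR01 · ω) (fun m ↦ by positivity), exp_le_exp]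
  have hlog_sum : ∑ m ∈ Finset.Icc 1 n, R m ω * log (h (X m ω))
      = -(t * ∑ m ∈ Finset.Icc 1 n, g (X m ω) * R m ω)
        - (∑ m ∈ Finset.Icc 1 n, R m ω) * log φ := by
    rw [Finset.mul_sum, Finset.sum_mul, ← Finset.sum_neg_distrib, ← Finset.sum_sub_distrib]
    refine Finset.sum_congr rfl fun m _ ↦ ?_
    rw [log_div (exp_pos _).ne' hφ.ne', log_exp]
    ring
  have hN0 : 0 ≤ ∑ m ∈ Finset.Icc 1 n, R m ω := (mul_nonneg hρ0 n.cast_nonneg).trans hN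
  have h1 := mul_le_mul_of_nonneg_left hΛ.le ht0.le
  have h2 := mul_le_mul_of_nonneg_right hN (mul_nonneg ht0.le (sub_nonneg.2 hδI))
  have h3 := mul_le_mul_of_nonneg_left (le_neg_of_le_neg hlogφ) hN0
  rw [hlog_sum]
  nlinarith [mul_nonneg (mul_nonneg ht0.le n.cast_nonneg) (sub_nonneg.2 hρδ)]

end Model

theorem stmt_4_general {Ω : Type*} [mΩ : MeasurableSpace Ω] (P : Measure Ω) [IsProbabilityMeasure P]
    {S : Type*} [mS : MeasurableSpace S] (μ0 μ1 : Measure S)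
    [IsProbabilityMeasure μ0] [IsProbabilityMeasure μ1]
    -- both KL divergences are finite and positive
    (hac1 : μ1 ≪ μ0)
    (hint1 : Integrable (llr μ1 μ0) μ1)
    (I : ℝ) (hI : I = ∫ x, llr μ1 μ0 x ∂μ1) (hIpos : 0 < I)
    -- the filtration
    (F : Filtration ℕ mΩ)
    -- the i.i.d. observations, with common law μ1, adapted and independent of the past
    (X : ℕ → Ω → S)
    (hXmeas : ∀ n, 1 ≤ n → Measurable[F n] (X n))
    (hXlaw : ∀ n, 1 ≤ n → Measure.map (X n) P = μ1)
    (hXindep : ∀ n, 1 ≤ n → Indep (MeasurableSpace.comap (X n) mS) (F (n - 1)) P)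
    -- the sampling indicators, previsible and {0,1}-valued
    (R : ℕ → Ω → ℝ)
    (hR01 : ∀ n ω, R n ω = 0 ∨ R n ω = 1)
    (hRmeas : ∀ n, 1 ≤ n → Measurable[F (n - 1)] (R n))
    (ρ : ℝ) (hρ : ρ ∈ Set.Ioc (0:ℝ) 1)
    (hsum : (∑' n : ℕ, P {ω | (∑ m ∈ Finset.Icc 1 n, R m ω) / n < ρ}) < ⊤)
    (ζ : ℝ) (hζ : 0 < ζ) :
    (∑' n : ℕ,
        P {ω | (∑ m ∈ Finset.Icc 1 n, llr μ1 μ0 (X m ω) * R m ω) < n * (ρ * I - ζ)}) < ⊤ := by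
  subst hI
  obtain ⟨c, hc, hchernoff⟩ := exists_measure_sum_llr_lt_inter_le hac1 hint1 hIpos hXmeas hXlaw
    hXindep hR01 hRmeas hρ.1.le hρ.2 hζ
  have hsplit : ∀ n : ℕ, ∀ ω, ρ * n ≤ ∑ m ∈ Finset.Icc 1 n, R m ω ∨
      (∑ m ∈ Finset.Icc 1 n, R m ω) / n < ρ := fun n ω ↦ by
    rcases n.eq_zero_or_pos with rfl | hn
    · simp [hρ.1]
    · rw [div_lt_iff₀ (by positivity), mul_comm]; exact le_or_gt _ _
  have hgeom : ∑' n : ℕ, ENNReal.ofReal (exp (-(c * n))) < ⊤ := by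
    have hsummable : Summable fun n : ℕ ↦ exp (-(c * n)) := by
      simpa [mul_comm] using Real.summable_exp_nat_mul_iff.mpr (neg_lt_zero.mpr hc)
    rw [← ENNReal.ofReal_tsum_of_nonneg (fun _ ↦ (exp_pos _).le) hsummable]
    exact ENNReal.ofReal_lt_top
  calc _ ≤ ∑' n : ℕ, (P {ω | (∑ m ∈ Finset.Icc 1 n, R m ω) / n < ρ}
          + ENNReal.ofReal (exp (-(c * n)))) := by
        refine ENNReal.tsum_le_tsum fun n ↦ (measure_mono fun ω hω ↦ ?_).trans
          ((measure_union_le _ _).trans (add_le_add_right (hchernoff n) _))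
        exact (hsplit n ω).elim (fun hN ↦ Or.inr ⟨hω, hN⟩) Or.inl
    _ < ⊤ := by rw [ENNReal.tsum_add]; exact ENNReal.add_lt_top.mpr ⟨hsum, hgeom⟩

theorem stmt_4 {Ω : Type*} [mΩ : MeasurableSpace Ω] (P : Measure Ω) [IsProbabilityMeasure P]
    {S : Type*} [mS : MeasurableSpace S] (μ0 μ1 : Measure S)
    [IsProbabilityMeasure μ0] [IsProbabilityMeasure μ1]
    -- both KL divergences are finite and positive
    (hac1 : μ1 ≪ μ0) (hac0 : μ0 ≪ μ1)
    (hint1 : Integrable (llr μ1 μ0) μ1) (hint0 : Integrable (llr μ0 μ1) μ0)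
    (I : ℝ) (hI : I = ∫ x, llr μ1 μ0 x ∂μ1) (hIpos : 0 < I)
    (hJpos : 0 < ∫ x, llr μ0 μ1 x ∂μ0)
    -- the filtration
    (F : Filtration ℕ mΩ)
    -- the i.i.d. observations, with common law μ1, adapted and independent of the past
    (X : ℕ → Ω → S)
    (hXmeas : ∀ n, 1 ≤ n → Measurable[F n] (X n))
    (hXlaw : ∀ n, 1 ≤ n → Measure.map (X n) P = μ1)
    (hXiid : iIndepFun X P)
    (hXindep : ∀ n, 1 ≤ n → Indep (MeasurableSpace.comap (X n) mS) (F (n - 1)) P)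
    -- the sampling indicators, previsible and {0,1}-valued
    (R : ℕ → Ω → ℝ)
    (hR01 : ∀ n ω, R n ω = 0 ∨ R n ω = 1)
    (hRmeas : ∀ n, 1 ≤ n → Measurable[F (n - 1)] (R n))
    (ρ : ℝ) (hρ : ρ ∈ Set.Ioc (0:ℝ) 1)
    (hsum : (∑' n : ℕ, P {ω | (∑ m ∈ Finset.Icc 1 n, R m ω) / n < ρ}) < ⊤)
    (ζ : ℝ) (hζ : 0 < ζ) :
    (∑' n : ℕ,
        P {ω | (∑ m ∈ Finset.Icc 1 n, llr μ1 μ0 (X m ω) * R m ω) < n * (ρ * I - ζ)}) < ⊤ :=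
  stmt_4_general (mΩ := mΩ) P (mS := mS) μ0 μ1 hac1 hint1 I hI hIpos F X hXmeas hXlaw hXindep R hR01
    hRmeas ρ hρ hsum ζ hζ
end

section
/- If ρ ∈ (0,1] is such that ∑_n P(π(n) < ρ) < ∞, then for every ζ > 0 we have ∑_n P(Λ(n) > n·(−ρ·J + ζ)) < ∞. -/
/-!
With `g = llr μ1 μ0` and `K s = cgf g μ0 s`, the slopes `(exp (s g) - 1) / s` decrease to `g` as
`s ↓ 0`, so `K s ≤ s (-J + ε)` for some `s ∈ (0, 1]`. Since `R m` is predictable and `X m` is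
independent of the past, `exp (s Λ(n) - K s ∑_{m ≤ n} R m)` is a product of factors of conditional
mean one and hence has mean one. On `{Λ(n) > n (-ρJ + ζ)} ∩ {π(n) ≥ ρ}` its exponent is at least
`n β` with `β = s (ζ - ρJ) - ρ K s > 0`, so by Markov's inequality this part of the event has
probability at most `exp (-β) ^ n`; the rest lies in `{π(n) < ρ}`, which is summable by assumption.
-/

open MeasureTheory ProbabilityTheory Filter Topology Real Finset
open scoped ENNReal

lemma exp_mul_of_eq_zero_or_eq_one {r : ℝ} (hr : r = 0 ∨ r = 1) (x : ℝ) :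
    exp (r * x) = 1 - r + r * exp x := by
  rcases hr with rfl | rfl <;> simp

lemma exp_mul_sub_one_div_le_of_le {s s' : ℝ} (hs : 0 < s) (hss' : s ≤ s') (t : ℝ) :
    (exp (s * t) - 1) / s ≤ (exp (s' * t) - 1) / s' := by
  have hconvex : ConvexOn ℝ Set.univ fun u : ℝ => exp (u * t) :=
    convexOn_exp.comp_linearMap (LinearMap.mulRight ℝ t)
  simpa using hconvex.secant_mono (Set.mem_univ 0) (Set.mem_univ s) (Set.mem_univ s')
    hs.ne' (hs.trans_le hss').ne' hss'

lemma tendsto_exp_mul_sub_one_div (t : ℝ) :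
    Tendsto (fun s => (exp (s * t) - 1) / s) (𝓝[≠] 0) (𝓝 t) := by
  have hderiv : HasDerivAt (fun u : ℝ => exp (u * t)) t 0 := by
    simpa using ((hasDerivAt_id (0 : ℝ)).mul_const t).exp
  refine hderiv.tendsto_slope.congr fun s => ?_
  rw [slope_def_field]
  simp [div_eq_inv_mul]

lemma tendsto_one_div_add_one_nhdsNE_zero :
    Tendsto (fun k : ℕ => 1 / ((k : ℝ) + 1)) atTop (𝓝[≠] 0) :=
  tendsto_nhdsWithin_iff.2 ⟨tendsto_one_div_add_atTop_nhds_zero_nat,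
    Eventually.of_forall fun k => by simp only [Set.mem_compl_iff, Set.mem_singleton_iff]; positivity⟩

lemma one_div_natCast_add_one_mem_Ioc (k : ℕ) : 1 / ((k : ℝ) + 1) ∈ Set.Ioc (0 : ℝ) 1 :=
  ⟨by positivity, (div_le_one (by positivity)).2 (by simp)⟩

lemma div_natCast_lt_of_lt_mul {a ρ : ℝ} (hρ : 0 < ρ) {n : ℕ} (h : a < ρ * n) : a / n < ρ := by
  rcases n.eq_zero_or_pos with rfl | hn
  · simpa using hρ
  · rwa [div_lt_iff₀ (by exact_mod_cast hn)]

lemma ENNReal.tsum_lt_top_of_le_geometric_add {f g : ℕ → ℝ≥0∞} {q : ℝ≥0∞} (hq : q < 1)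
    (hfg : ∀ n, f n ≤ q ^ n + g n) (hg : ∑' n, g n < ∞) : ∑' n, f n < ∞ :=
  calc ∑' n, f n ≤ ∑' n, (q ^ n + g n) := ENNReal.tsum_le_tsum hfg
    _ = ∑' n, q ^ n + ∑' n, g n := ENNReal.tsum_add
    _ < ∞ := ENNReal.add_lt_top.2
      ⟨ENNReal.tsum_geometric q ▸ ENNReal.inv_lt_top.2 (tsub_pos_iff_lt.2 hq), hg⟩

section Cgf

variable {Ω : Type*} {mΩ : MeasurableSpace Ω} {μ : Measure Ω} [IsProbabilityMeasure μ] {X : Ω → ℝ}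

-- By convexity of `exp` the slopes `(exp (s X) - 1) / s` decrease to `X` as `s ↓ 0`, so this is
-- monotone convergence.
lemma tendsto_mgf_sub_one_div (hX : Integrable X μ) (hexp : Integrable (fun ω => exp (X ω)) μ) :
    Tendsto (fun k : ℕ => (mgf X μ (1 / ((k : ℝ) + 1)) - 1) / (1 / ((k : ℝ) + 1))) atTop
      (𝓝 μ[X]) := by
  set s : ℕ → ℝ := fun k => 1 / ((k : ℝ) + 1)
  have hs_anti : Antitone s := fun k l hkl =>
    one_div_le_one_div_of_le (by positivity) (by simpa using hkl)
  have hexp_s (k : ℕ) : Integrable (fun ω => exp (s k * X ω)) μ :=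
    integrable_exp_mul_of_nonneg_of_le (u := 1) (by simpa using hexp)
      (one_div_natCast_add_one_mem_Ioc k).1.le (one_div_natCast_add_one_mem_Ioc k).2
  have hint (k : ℕ) : Integrable (fun ω => -((exp (s k * X ω) - 1) / s k)) μ :=
    (((hexp_s k).sub (integrable_const 1)).div_const _).neg
  have hlim := integral_tendsto_of_tendsto_of_monotone hint hX.neg
    (Eventually.of_forall fun ω k l hkl => neg_le_neg <| exp_mul_sub_one_div_le_of_le
      (one_div_natCast_add_one_mem_Ioc l).1 (hs_anti hkl) (X ω))
    (Eventually.of_forall fun ω =>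
      ((tendsto_exp_mul_sub_one_div (X ω)).comp tendsto_one_div_add_one_nhdsNE_zero).neg)
  replace hlim := hlim.neg
  simp only [Pi.neg_apply, integral_neg, neg_neg] at hlim
  refine hlim.congr fun k => ?_
  rw [integral_div, integral_sub (hexp_s k) (integrable_const 1)]
  simp [mgf, s]

lemma exists_cgf_le_mul (hX : Integrable X μ) (hexp : Integrable (fun ω => exp (X ω)) μ)
    {ε : ℝ} (hε : 0 < ε) : ∃ s ∈ Set.Ioc (0 : ℝ) 1, cgf X μ s ≤ s * (μ[X] + ε) := by
  obtain ⟨k, hk⟩ := ((tendsto_mgf_sub_one_div hX hexp).eventually_lt_const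
    (lt_add_of_pos_right _ hε)).exists
  set s : ℝ := 1 / ((k : ℝ) + 1)
  have hs : s ∈ Set.Ioc (0 : ℝ) 1 := one_div_natCast_add_one_mem_Ioc k
  refine ⟨s, hs, ?_⟩
  have hmgf := mgf_pos (integrable_exp_mul_of_nonneg_of_le (u := 1) (by simpa using hexp)
    hs.1.le hs.2)
  rw [div_lt_iff₀ hs.1] at hk
  calc cgf X μ s ≤ mgf X μ s - 1 := log_le_sub_one_of_pos hmgf
    _ ≤ s * (μ[X] + ε) := by linarith

lemma integral_exp_mul_sub_cgf {t : ℝ} (h : Integrable (fun ω => exp (t * X ω)) μ) :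
    ∫ ω, exp (t * X ω - cgf X μ t) ∂μ = 1 := by
  simp_rw [exp_sub]
  rw [integral_div, exp_cgf h]
  exact div_self (mgf_pos h).ne'

end Cgf

section ExponentialMartingale

variable {Ω : Type*} {mΩ : MeasurableSpace Ω} {P : Measure Ω}

lemma integrable_mul_exp_mul_and_integral_eq {m : MeasurableSpace Ω} (hm : m ≤ mΩ)
    {W R ξ : Ω → ℝ} (hW : Integrable W P) (hWm : Measurable[m] W) (hRm : Measurable[m] R)
    (hR01 : ∀ ω, R ω = 0 ∨ R ω = 1) (hξ : Integrable (fun ω => exp (ξ ω)) P)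
    (hξ1 : ∫ ω, exp (ξ ω) ∂P = 1) (hind : Indep (MeasurableSpace.comap ξ inferInstance) m P) :
    Integrable (fun ω => W ω * exp (R ω * ξ ω)) P ∧
      ∫ ω, W ω * exp (R ω * ξ ω) ∂P = ∫ ω, W ω ∂P := by
  have hsplit : (fun ω => W ω * exp (R ω * ξ ω))
      = fun ω => W ω - W ω * R ω + W ω * R ω * exp (ξ ω) := by
    ext ω
    rw [exp_mul_of_eq_zero_or_eq_one (hR01 ω)]
    ring
  have hWR : Integrable (fun ω => W ω * R ω) P :=
    hW.mul_bdd (hRm.mono hm le_rfl).aestronglyMeasurable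
      (Eventually.of_forall fun ω => by rcases hR01 ω with h | h <;> simp [h] : ∀ᵐ ω ∂P, ‖R ω‖ ≤ 1)
  have hindep : IndepFun (fun ω => W ω * R ω) (fun ω => exp (ξ ω)) P := by
    rw [IndepFun_iff_Indep]
    refine indep_of_indep_of_le_right (indep_of_indep_of_le_left hind.symm ?_) ?_
    · exact (hWm.mul hRm).comap_le
    · exact (measurable_exp.comp (comap_measurable ξ)).comap_le
  have hprod : Integrable (fun ω => W ω * R ω * exp (ξ ω)) P := hindep.integrable_mul hWR hξ
  have hdiff : Integrable (fun ω => W ω - W ω * R ω) P := hW.sub hWR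
  refine ⟨hsplit ▸ hdiff.add hprod, ?_⟩
  rw [hsplit, integral_add hdiff hprod, integral_sub hW hWR]
  have hmul := hindep.integral_mul_eq_mul_integral hWR.aestronglyMeasurable
    hξ.aestronglyMeasurable
  simp only [Pi.mul_apply] at hmul
  rw [hmul, hξ1, mul_one, sub_add_cancel]

lemma integrable_exp_sum_mul_and_integral_eq_one [IsProbabilityMeasure P]
    (F : Filtration ℕ mΩ) {R ξ : ℕ → Ω → ℝ} (hR01 : ∀ n ω, R n ω = 0 ∨ R n ω = 1)
    (hRmeas : ∀ n, 1 ≤ n → Measurable[F (n - 1)] (R n))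
    (hξmeas : ∀ n, 1 ≤ n → Measurable[F n] (ξ n))
    (hξ : ∀ n, 1 ≤ n → Integrable (fun ω => exp (ξ n ω)) P)
    (hξ1 : ∀ n, 1 ≤ n → ∫ ω, exp (ξ n ω) ∂P = 1)
    (hind : ∀ n, 1 ≤ n → Indep (MeasurableSpace.comap (ξ n) inferInstance) (F (n - 1)) P)
    (n : ℕ) :
    Integrable (fun ω => exp (∑ m ∈ Icc 1 n, R m ω * ξ m ω)) P ∧
      ∫ ω, exp (∑ m ∈ Icc 1 n, R m ω * ξ m ω) ∂P = 1 := by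
  induction n with
  | zero => simp
  | succ n ih =>
    have hmeas : Measurable[F n] fun ω => exp (∑ m ∈ Icc 1 n, R m ω * ξ m ω) := by
      refine measurable_exp.comp (Finset.measurable_sum _ fun m hm => ?_)
      obtain ⟨hm1, hmn⟩ := Finset.mem_Icc.1 hm
      exact ((hRmeas m hm1).mono (F.mono (by omega)) le_rfl).mul
        ((hξmeas m hm1).mono (F.mono hmn) le_rfl)
    have hstep := integrable_mul_exp_mul_and_integral_eq (F.le n) ih.1 hmeas
      (by simpa using hRmeas (n + 1) (by omega)) (hR01 (n + 1)) (hξ (n + 1) (by omega))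
      (hξ1 (n + 1) (by omega)) (by simpa using hind (n + 1) (by omega))
    simp only [Finset.sum_Icc_succ_top (Nat.le_add_left 1 n), exp_add]
    exact ⟨hstep.1, hstep.2.trans ih.2⟩

lemma measure_le_mul_sum_sub_cgf_mul_sum_le [IsProbabilityMeasure P] {S : Type*}
    [mS : MeasurableSpace S] {μ0 : Measure S} [IsProbabilityMeasure μ0] (F : Filtration ℕ mΩ)
    {X : ℕ → Ω → S} (hXmeas : ∀ n, 1 ≤ n → Measurable[F n] (X n))
    (hXlaw : ∀ n, 1 ≤ n → Measure.map (X n) P = μ0)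
    (hXindep : ∀ n, 1 ≤ n → Indep (MeasurableSpace.comap (X n) mS) (F (n - 1)) P)
    {R : ℕ → Ω → ℝ} (hR01 : ∀ n ω, R n ω = 0 ∨ R n ω = 1)
    (hRmeas : ∀ n, 1 ≤ n → Measurable[F (n - 1)] (R n))
    {g : S → ℝ} (hg : Measurable g) {s : ℝ} (hexp : Integrable (fun x => exp (s * g x)) μ0)
    (n : ℕ) (c : ℝ) :
    P {ω | n * c ≤ s * ∑ m ∈ Icc 1 n, g (X m ω) * R m ω - cgf g μ0 s * ∑ m ∈ Icc 1 n, R m ω}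
      ≤ ENNReal.ofReal (exp (-c)) ^ n := by
  set K := cgf g μ0 s
  have hφ : Measurable fun x => s * g x - K := (hg.const_mul s).sub_const K
  have hφ_int : Integrable (fun x => exp (s * g x - K)) μ0 := by
    simp_rw [exp_sub]; exact hexp.div_const _
  have hXm (m : ℕ) (hm : 1 ≤ m) : Measurable (X m) := (hXmeas m hm).mono (F.le m) le_rfl
  have hint (m : ℕ) (hm : 1 ≤ m) : Integrable (fun ω => exp (s * g (X m ω) - K)) P := by
    rw [← hXlaw m hm] at hφ_int
    exact (integrable_map_measure hφ.exp.aestronglyMeasurable (hXm m hm).aemeasurable).1 hφ_int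
  have hint_eq (m : ℕ) (hm : 1 ≤ m) : ∫ ω, exp (s * g (X m ω) - K) ∂P = 1 := by
    rw [← integral_map (hXm m hm).aemeasurable hφ.exp.aestronglyMeasurable, hXlaw m hm]
    exact integral_exp_mul_sub_cgf hexp
  have hindep (m : ℕ) (hm : 1 ≤ m) :
      Indep (MeasurableSpace.comap (fun ω => s * g (X m ω) - K) inferInstance) (F (m - 1)) P :=
    indep_of_indep_of_le_left (hXindep m hm)
      (MeasurableSpace.comap_comp.symm.trans_le (MeasurableSpace.comap_mono hφ.comap_le))
  obtain ⟨hsum_int, hsum_eq⟩ := integrable_exp_sum_mul_and_integral_eq_one F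
    (ξ := fun m ω => s * g (X m ω) - K) hR01 hRmeas (fun m hm => hφ.comp (hXmeas m hm)) hint
    hint_eq hindep n
  have hsum (ω : Ω) : ∑ m ∈ Icc 1 n, R m ω * (s * g (X m ω) - K)
      = s * ∑ m ∈ Icc 1 n, g (X m ω) * R m ω - K * ∑ m ∈ Icc 1 n, R m ω := by
    simp only [Finset.mul_sum, ← Finset.sum_sub_distrib]
    exact Finset.sum_congr rfl fun m _ => by ring
  simp only [hsum] at hsum_int hsum_eq
  have hchernoff := measure_ge_le_exp_mul_mgf (μ := P) (n * c) zero_le_one (by simpa using hsum_int)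
  simp only [mgf, one_mul, hsum_eq, mul_one] at hchernoff
  rw [← ofReal_measureReal, ← ENNReal.ofReal_pow (exp_pos _).le, ← exp_nat_mul]
  exact ENNReal.ofReal_le_ofReal (hchernoff.trans_eq (by ring_nf))

end ExponentialMartingale

theorem stmt_5_general {Ω : Type*} [mΩ : MeasurableSpace Ω] (P : Measure Ω) [IsProbabilityMeasure P]
    {S : Type*} [mS : MeasurableSpace S] (μ0 μ1 : Measure S)
    [IsProbabilityMeasure μ0] [IsProbabilityMeasure μ1]
    -- both KL divergences are finite and positive
    (hac0 : μ0 ≪ μ1)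
    (hint0 : Integrable (llr μ0 μ1) μ0)
    (J : ℝ) (hJ : J = ∫ x, llr μ0 μ1 x ∂μ0) (hJpos : 0 < J)
    -- the filtration
    (F : Filtration ℕ mΩ)
    -- the i.i.d. observations, with common law μ0, adapted and independent of the past
    (X : ℕ → Ω → S)
    (hXmeas : ∀ n, 1 ≤ n → Measurable[F n] (X n))
    (hXlaw : ∀ n, 1 ≤ n → Measure.map (X n) P = μ0)
    (hXindep : ∀ n, 1 ≤ n → Indep (MeasurableSpace.comap (X n) mS) (F (n - 1)) P)
    -- the sampling indicators, previsible and {0,1}-valued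
    (R : ℕ → Ω → ℝ)
    (hR01 : ∀ n ω, R n ω = 0 ∨ R n ω = 1)
    (hRmeas : ∀ n, 1 ≤ n → Measurable[F (n - 1)] (R n))
    (ρ : ℝ) (hρ : ρ ∈ Set.Ioc (0:ℝ) 1)
    (hsum : (∑' n : ℕ, P {ω | (∑ m ∈ Finset.Icc 1 n, R m ω) / n < ρ}) < ⊤)
    (ζ : ℝ) (hζ : 0 < ζ) :
    (∑' n : ℕ,
        P {ω | n * (-(ρ * J) + ζ) < ∑ m ∈ Finset.Icc 1 n, llr μ1 μ0 (X m ω) * R m ω}) < ⊤ := by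
  obtain ⟨hρ0, hρ1⟩ := hρ
  have hg : Integrable (llr μ1 μ0) μ0 := hint0.neg.congr (neg_llr hac0)
  have hg_mean : μ0[llr μ1 μ0] = -J := by
    rw [hJ, ← integral_neg]
    exact integral_congr_ae (neg_llr hac0).symm
  have hexp : Integrable (fun x => exp (llr μ1 μ0 x)) μ0 :=
    Measure.integrable_toReal_rnDeriv.congr (exp_llr_of_ac' μ1 μ0 hac0).symm
  -- `ε ≤ J` gives `K ≤ 0`, and `ε ≤ ζ / 2` gives `hβ`.
  set ε := min (ζ / 2) J
  have hε : 0 < ε := lt_min (half_pos hζ) hJpos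
  obtain ⟨s, ⟨hs0, hs1⟩, hcgf⟩ := exists_cgf_le_mul hg hexp hε
  rw [hg_mean] at hcgf
  set K := cgf (llr μ1 μ0) μ0 s
  have hK : K ≤ 0 := hcgf.trans (mul_nonpos_of_nonneg_of_nonpos hs0.le
    (by linarith [min_le_right (ζ / 2) J]))
  have hβ : 0 < s * (-(ρ * J) + ζ) - ρ * K := by
    have hρε : ρ * ε < ζ := by nlinarith [min_le_left (ζ / 2) J]
    nlinarith [mul_le_mul_of_nonneg_left hcgf hρ0.le, mul_pos hs0 (sub_pos.2 hρε)]
  refine ENNReal.tsum_lt_top_of_le_geometric_add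
    (ENNReal.ofReal_lt_one.2 (exp_lt_one_iff.2 (neg_neg_of_pos hβ))) (fun n => ?_) hsum
  refine (measure_le_inter_add_sdiff P _ {ω | ρ * n ≤ ∑ m ∈ Icc 1 n, R m ω}).trans
    (add_le_add ((measure_mono ?_).trans (measure_le_mul_sum_sub_cgf_mul_sum_le F hXmeas hXlaw
      hXindep hR01 hRmeas (measurable_llr μ1 μ0) (integrable_exp_mul_of_nonneg_of_le (u := 1)
        (by simpa using hexp) hs0.le hs1) n _)) (measure_mono ?_))
  · rintro ω ⟨hΛ, hcount⟩
    simp only [Set.mem_ofPred_eq] at hΛ hcount ⊢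
    nlinarith [mul_le_mul_of_nonneg_left (le_of_lt hΛ) hs0.le, mul_le_mul_of_nonpos_left hcount hK]
  · rintro ω ⟨-, hcount⟩
    exact div_natCast_lt_of_lt_mul hρ0 (not_le.1 hcount)

theorem stmt_5 {Ω : Type*} [mΩ : MeasurableSpace Ω] (P : Measure Ω) [IsProbabilityMeasure P]
    {S : Type*} [mS : MeasurableSpace S] (μ0 μ1 : Measure S)
    [IsProbabilityMeasure μ0] [IsProbabilityMeasure μ1]
    -- both KL divergences are finite and positive
    (hac1 : μ1 ≪ μ0) (hac0 : μ0 ≪ μ1)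
    (hint1 : Integrable (llr μ1 μ0) μ1) (hint0 : Integrable (llr μ0 μ1) μ0)
    (hIpos : 0 < ∫ x, llr μ1 μ0 x ∂μ1)
    (J : ℝ) (hJ : J = ∫ x, llr μ0 μ1 x ∂μ0) (hJpos : 0 < J)
    -- the filtration
    (F : Filtration ℕ mΩ)
    -- the i.i.d. observations, with common law μ0, adapted and independent of the past
    (X : ℕ → Ω → S)
    (hXmeas : ∀ n, 1 ≤ n → Measurable[F n] (X n))
    (hXlaw : ∀ n, 1 ≤ n → Measure.map (X n) P = μ0)
    (hXiid : iIndepFun X P)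
    (hXindep : ∀ n, 1 ≤ n → Indep (MeasurableSpace.comap (X n) mS) (F (n - 1)) P)
    -- the sampling indicators, previsible and {0,1}-valued
    (R : ℕ → Ω → ℝ)
    (hR01 : ∀ n ω, R n ω = 0 ∨ R n ω = 1)
    (hRmeas : ∀ n, 1 ≤ n → Measurable[F (n - 1)] (R n))
    (ρ : ℝ) (hρ : ρ ∈ Set.Ioc (0:ℝ) 1)
    (hsum : (∑' n : ℕ, P {ω | (∑ m ∈ Finset.Icc 1 n, R m ω) / n < ρ}) < ⊤)
    (ζ : ℝ) (hζ : 0 < ζ) :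
    (∑' n : ℕ,
        P {ω | n * (-(ρ * J) + ζ) < ∑ m ∈ Finset.Icc 1 n, llr μ1 μ0 (X m ω) * R m ω}) < ⊤ :=
  stmt_5_general (mΩ := mΩ) P (mS := mS) μ0 μ1 hac0 hint0 J hJ hJpos F X hXmeas hXlaw hXindep R hR01
    hRmeas ρ hρ hsum ζ hζ
end
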